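/- arXiv:1711.05501 — 3 statements merged into one kernel-verified Lean document; each statement's English description precedes it below -/
import Mathlib

section
/- Let λ, d, β, a, p1, p2, c1, c2, b1, b2, q, h be positive real numbers, let A := c2·(λ − d·q) − b2·β, and assume A > 0 and D := A² − 4·β·c2·q·d·b2 ≥ 0. Set x2 := (A − √D)/(2·β·c2·q) and x1 := λ/(d + β·x2). Then c2·x1·x2 − c2·q·x2 − b2 = 0; equivalently, x1 = q + b2/(c2·x2). -/
/-- At the recovery steady state, `c2·x1·x2 − c2·q·x2 − b2 = 0`; equivalently
`x1 = q + b2/(c2·x2)`. -/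
theorem hiv_third_equation_steady
    (lam d β a p1 p2 c1 c2 b1 b2 q h : ℝ)
    (hlam : 0 < lam) (hd : 0 < d) (hβ : 0 < β) (ha : 0 < a)
    (hp1 : 0 < p1) (hp2 : 0 < p2) (hc1 : 0 < c1) (hc2 : 0 < c2)
    (hb1 : 0 < b1) (hb2 : 0 < b2) (hq : 0 < q) (hh : 0 < h)
    (A D x1 x2 : ℝ)
    (hA : A = c2 * (lam - d * q) - b2 * β)
    (hApos : 0 < A)
    (hD : D = A ^ 2 - 4 * β * c2 * q * d * b2)
    (hDnonneg : 0 ≤ D)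
    (hx2 : x2 = (A - Real.sqrt D) / (2 * β * c2 * q))
    (hx1 : x1 = lam / (d + β * x2)) :
    c2 * x1 * x2 - c2 * q * x2 - b2 = 0 ∧ x1 = q + b2 / (c2 * x2) := by
  set s := Real.sqrt D with hs
  have hs0 : 0 ≤ s := Real.sqrt_nonneg D
  have hs2 : s ^ 2 = D := Real.sq_sqrt hDnonneg
  have hsA : s < A := by
    have hDlt : D < A ^ 2 := by
      have : 0 < 4 * β * c2 * q * d * b2 := by positivity
      nlinarith
    nlinarith
  have hden : (0:ℝ) < 2 * β * c2 * q := by positivity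
  have hx2pos : 0 < x2 := by
    rw [hx2]
    exact div_pos (by linarith) hden
  -- quadratic identity
  have hx2eq : x2 * (2 * β * c2 * q) = A - s := by
    rw [hx2]; field_simp
  have hquad : β * c2 * q * x2 ^ 2 - A * x2 + d * b2 = 0 := by
    nlinarith [hx2eq, hs2, hD]
  have hdpos : 0 < d + β * x2 := by positivity
  have hx1' : x1 * (d + β * x2) = lam := by
    rw [hx1]; field_simp
  have hprod : (c2 * x1 * x2 - c2 * q * x2 - b2) * (d + β * x2) = 0 := by
    subst hA
    linear_combination (c2 * x2) * hx1' - hquad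
  have key : c2 * x1 * x2 - c2 * q * x2 - b2 = 0 :=
    (mul_eq_zero.mp hprod).resolve_right hdpos.ne'
  refine ⟨key, ?_⟩
  have hc2x2 : (c2 * x2) ≠ 0 := by positivity
  field_simp
  linear_combination key
end

section
/- Let λ, d, β, a, p1, p2, c1, c2, b1, b2, q, h be positive real numbers, let A := c2·(λ − d·q) − b2·β, and assume A > 0 and D := A² − 4·β·c2·q·d·b2 ≥ 0. Set x2 := (A − √D)/(2·β·c2·q), x1 := λ/(d + β·x2), and x5 := (x2·c2·(β·q − a) + b2·β)/(c2·p2·x2). Then β·x1 − a − p2·x5 = 0; that is, the defined value of x5 equals (β·x1 − a)/p2. -/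
/-! `x2` is the smaller root of `β c2 q · X² − A · X + d b2`, which is positive because `A > 0` and
the product of the roots is positive. Clearing denominators, `β x1 − a − p2 x5 = 0` is that quadratic
equation for `x2` multiplied by `β`. -/

theorem sub_sqrt_sq_sub_pos {A c D : ℝ} (hA : 0 < A) (hc : 0 < c) (hD : D = A ^ 2 - c) :
    0 < A - Real.sqrt D := by
  have : Real.sqrt D < A := (Real.sqrt_lt' hA).2 (by linarith)
  linarith

theorem steady_state_balance_of_root {K : Type*} [Field K] {lam d β a p2 c2 b2 q x : K}
    (hx : x ≠ 0) (hdx : d + β * x ≠ 0) (hc2 : c2 ≠ 0) (hp2 : p2 ≠ 0)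
    (hroot : β * c2 * q * (x * x) + -(c2 * (lam - d * q) - b2 * β) * x + d * b2 = 0) :
    β * (lam / (d + β * x)) - a - p2 * ((x * c2 * (β * q - a) + b2 * β) / (c2 * p2 * x)) = 0 := by
  field_simp
  linear_combination (-β) * hroot

theorem hiv_second_equation_steady_general
    (lam d β a p2 c2 b2 q : ℝ)
    (hd : 0 < d) (hβ : 0 < β)
    (hp2 : 0 < p2) (hc2 : 0 < c2)
    (hb2 : 0 < b2) (hq : 0 < q)
    (A D x1 x2 x5 : ℝ)
    (hA : A = c2 * (lam - d * q) - b2 * β)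
    (hApos : 0 < A)
    (hD : D = A ^ 2 - 4 * β * c2 * q * d * b2)
    (hDnonneg : 0 ≤ D)
    (hx2 : x2 = (A - Real.sqrt D) / (2 * β * c2 * q))
    (hx1 : x1 = lam / (d + β * x2))
    (hx5 : x5 = (x2 * c2 * (β * q - a) + b2 * β) / (c2 * p2 * x2)) :
    β * x1 - a - p2 * x5 = 0 ∧ x5 = (β * x1 - a) / p2 := by
  have hx2pos : 0 < x2 := by
    rw [hx2]
    have hprod : 0 < 4 * β * c2 * q * d * b2 := by positivity
    exact div_pos (sub_sqrt_sq_sub_pos hApos hprod hD) (by positivity)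
  have hdiscrim : discrim (β * c2 * q) (-A) (d * b2) = Real.sqrt D * Real.sqrt D := by
    rw [Real.mul_self_sqrt hDnonneg, hD, discrim]
    ring
  have hroot := ((quadratic_eq_zero_iff (by positivity) hdiscrim x2).2
    (Or.inr (by rw [hx2, neg_neg, ← mul_assoc, ← mul_assoc])))
  rw [hA] at hroot
  have hbalance : β * x1 - a - p2 * x5 = 0 := by
    rw [hx1, hx5]
    exact steady_state_balance_of_root hx2pos.ne' (by positivity) hc2.ne' hp2.ne' hroot
  refine ⟨hbalance, ?_⟩
  rw [eq_div_iff hp2.ne']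
  linarith

/-- At the recovery steady state, `β·x1 − a − p2·x5 = 0`; that is, the defined
value of `x5` equals `(β·x1 − a)/p2`. -/
theorem hiv_second_equation_steady
    (lam d β a p1 p2 c1 c2 b1 b2 q h : ℝ)
    (hlam : 0 < lam) (hd : 0 < d) (hβ : 0 < β) (ha : 0 < a)
    (hp1 : 0 < p1) (hp2 : 0 < p2) (hc1 : 0 < c1) (hc2 : 0 < c2)
    (hb1 : 0 < b1) (hb2 : 0 < b2) (hq : 0 < q) (hh : 0 < h)
    (A D x1 x2 x5 : ℝ)
    (hA : A = c2 * (lam - d * q) - b2 * β)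
    (hApos : 0 < A)
    (hD : D = A ^ 2 - 4 * β * c2 * q * d * b2)
    (hDnonneg : 0 ≤ D)
    (hx2 : x2 = (A - Real.sqrt D) / (2 * β * c2 * q))
    (hx1 : x1 = lam / (d + β * x2))
    (hx5 : x5 = (x2 * c2 * (β * q - a) + b2 * β) / (c2 * p2 * x2)) :
    β * x1 - a - p2 * x5 = 0 ∧ x5 = (β * x1 - a) / p2 :=
  hiv_second_equation_steady_general lam d β a p2 c2 b2 q hd hβ hp2 hc2 hb2 hq A D x1 x2 x5 hA hApos
    hD hDnonneg hx2 hx1 hx5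
end

section
/- Let λ, d, β, a, p1, p2, c1, c2, b1, b2, q, h be positive real numbers, let A := c2·(λ − d·q) − b2·β, and assume A > 0 and D := A² − 4·β·c2·q·d·b2 ≥ 0. Define x2 := (A − √D)/(2·β·c2·q), x1 := λ/(d + β·x2), x5 := (x2·c2·(β·q − a) + b2·β)/(c2·p2·x2), x3 := h·x5/(c2·q·x2), and x4 := 0. Then (x1, x2, x3, x4, x5) is an equilibrium of the unforced (u ≡ 0) HIV dynamics; that is, all five right-hand sides vanish at this point: λ − d·x1 − β·x1·x2 = 0, β·x1·x2 − a·x2 − p1·x4·x2 − p2·x5·x2 = 0, c2·x1·x2·x3 − c2·q·x2·x3 − b2·x3 = 0, c1·x2·x4 − b1·x4 = 0, and c2·q·x2·x3 − h·x5 = 0. -/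
/-!
The infected-cell level `x2` is the smaller root of `β c2 q x² − A x + d b2`, which is positive
since `A` and the constant term are positive. Substituting `x1 = λ / (d + β x2)` into the CTL-precursor growth rate
`c2 x1 x2 − c2 q x2 − b2` and clearing the denominator gives exactly minus that quadratic, so the rate
vanishes; the remaining equations are then immediate from the definitions of `x3`, `x4`, `x5`.
-/

section SmallerRoot

variable {a c A D x : ℝ}

theorem quadratic_smaller_root_isRoot (ha : a ≠ 0) (hD : D = A ^ 2 - 4 * a * c)
    (hDnonneg : 0 ≤ D) (hx : x = (A - √D) / (2 * a)) :
    a * x ^ 2 - A * x + c = 0 := by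
  have hdiscrim : discrim a (-A) c = √D * √D := by
    rw [Real.mul_self_sqrt hDnonneg, hD, discrim, neg_sq]
  have hroot := (quadratic_eq_zero_iff ha hdiscrim x).mpr (Or.inr (by rw [hx, neg_neg]))
  linear_combination hroot

theorem quadratic_smaller_root_pos (ha : 0 < a) (hc : 0 < c) (hA : 0 < A)
    (hD : D = A ^ 2 - 4 * a * c) (hx : x = (A - √D) / (2 * a)) :
    0 < x := by
  have hsqrt_lt : √D < A := (Real.sqrt_lt' hA).mpr (by nlinarith [mul_pos ha hc])
  rw [hx]
  exact div_pos (sub_pos.mpr hsqrt_lt) (by positivity)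

end SmallerRoot

theorem ctl_growth_rate_eq_zero {lam d β c2 q b2 x2 : ℝ}
    (hroot : β * c2 * q * x2 ^ 2 - (c2 * (lam - d * q) - b2 * β) * x2 + d * b2 = 0)
    (hden : d + β * x2 ≠ 0) :
    c2 * (lam / (d + β * x2)) * x2 - c2 * q * x2 - b2 = 0 := by
  field_simp
  linear_combination -hroot

theorem hiv_recovery_steady_state_equilibrium_general
    (lam d β a p1 p2 c1 c2 b1 b2 q h : ℝ)
    (hd : 0 < d) (hβ : 0 < β)
    (hp2 : 0 < p2) (hc2 : 0 < c2)
    (hb2 : 0 < b2) (hq : 0 < q)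
    (A D x1 x2 x3 x4 x5 : ℝ)
    (hA : A = c2 * (lam - d * q) - b2 * β)
    (hApos : 0 < A)
    (hD : D = A ^ 2 - 4 * β * c2 * q * d * b2)
    (hDnonneg : 0 ≤ D)
    (hx2 : x2 = (A - Real.sqrt D) / (2 * β * c2 * q))
    (hx1 : x1 = lam / (d + β * x2))
    (hx5 : x5 = (x2 * c2 * (β * q - a) + b2 * β) / (c2 * p2 * x2))
    (hx3 : x3 = h * x5 / (c2 * q * x2))
    (hx4 : x4 = 0) :
    lam - d * x1 - β * x1 * x2 = 0 ∧
    β * x1 * x2 - a * x2 - p1 * x4 * x2 - p2 * x5 * x2 = 0 ∧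
    c2 * x1 * x2 * x3 - c2 * q * x2 * x3 - b2 * x3 = 0 ∧
    c1 * x2 * x4 - b1 * x4 = 0 ∧
    c2 * q * x2 * x3 - h * x5 = 0 := by
  have hD' : D = A ^ 2 - 4 * (β * c2 * q) * (d * b2) := by rw [hD]; ring
  have hx2' : x2 = (A - √D) / (2 * (β * c2 * q)) := by rw [hx2]; ring
  have hx2_pos : 0 < x2 :=
    quadratic_smaller_root_pos (by positivity) (by positivity) hApos hD' hx2'
  have hroot : β * c2 * q * x2 ^ 2 - A * x2 + d * b2 = 0 :=
    quadratic_smaller_root_isRoot (by positivity) hD' hDnonneg hx2'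
  have hden : d + β * x2 ≠ 0 := by positivity
  have hx1_mul : x1 * (d + β * x2) = lam := by rw [hx1]; field_simp
  have hx5_mul : c2 * p2 * x5 * x2 = x2 * c2 * (β * q - a) + b2 * β := by rw [hx5]; field_simp
  have hrate : c2 * x1 * x2 - c2 * q * x2 - b2 = 0 := by
    rw [hx1]
    exact ctl_growth_rate_eq_zero (by rw [← hA]; linear_combination hroot) hden
  subst hx4
  refine ⟨by linear_combination -hx1_mul, ?_, by linear_combination x3 * hrate, by ring, ?_⟩
  · have hscaled : c2 * (β * x1 * x2 - a * x2 - p1 * 0 * x2 - p2 * x5 * x2) = 0 := by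
      linear_combination β * hrate - hx5_mul
    exact (mul_eq_zero.mp hscaled).resolve_left hc2.ne'
  · rw [hx3, mul_div_cancel₀ _ (by positivity), sub_self]

/-- The recovery steady state `(x1, x2, x3, x4, x5)` is an equilibrium of the
unforced (`u ≡ 0`) HIV dynamics: all five right-hand sides vanish. -/
theorem hiv_recovery_steady_state_equilibrium
    (lam d β a p1 p2 c1 c2 b1 b2 q h : ℝ)
    (hlam : 0 < lam) (hd : 0 < d) (hβ : 0 < β) (ha : 0 < a)
    (hp1 : 0 < p1) (hp2 : 0 < p2) (hc1 : 0 < c1) (hc2 : 0 < c2)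
    (hb1 : 0 < b1) (hb2 : 0 < b2) (hq : 0 < q) (hh : 0 < h)
    (A D x1 x2 x3 x4 x5 : ℝ)
    (hA : A = c2 * (lam - d * q) - b2 * β)
    (hApos : 0 < A)
    (hD : D = A ^ 2 - 4 * β * c2 * q * d * b2)
    (hDnonneg : 0 ≤ D)
    (hx2 : x2 = (A - Real.sqrt D) / (2 * β * c2 * q))
    (hx1 : x1 = lam / (d + β * x2))
    (hx5 : x5 = (x2 * c2 * (β * q - a) + b2 * β) / (c2 * p2 * x2))
    (hx3 : x3 = h * x5 / (c2 * q * x2))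
    (hx4 : x4 = 0) :
    lam - d * x1 - β * x1 * x2 = 0 ∧
    β * x1 * x2 - a * x2 - p1 * x4 * x2 - p2 * x5 * x2 = 0 ∧
    c2 * x1 * x2 * x3 - c2 * q * x2 * x3 - b2 * x3 = 0 ∧
    c1 * x2 * x4 - b1 * x4 = 0 ∧
    c2 * q * x2 * x3 - h * x5 = 0 :=
  hiv_recovery_steady_state_equilibrium_general lam d β a p1 p2 c1 c2 b1 b2 q h hd hβ hp2 hc2 hb2 hq
    A D x1 x2 x3 x4 x5 hA hApos hD hDnonneg hx2 hx1 hx5 hx3 hx4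
end
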